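/- arXiv:math/0312488 — 3 statements merged into one kernel-verified Lean document; each statement's English description precedes it below -/
import Mathlib

section
/- In the q-deformed Heisenberg algebra defined by a(k)a†(ℓ) - q·a†(ℓ)a(k) = δ_{kℓ} and a(k)|0⟩ = 0, for distinct momenta k_1,...,k_n the vacuum expectation value ⟨0| a(k_{π(1)})···a(k_{π(n)}) a†(k_n)···a†(k_1) |0⟩ equals q^{I(π)} for any permutation π ∈ S_n, where I(π) is the inversion number of π. -/
/-- The inversion number of a permutation. -/
def inversions {n : ℕ} (π : Equiv.Perm (Fin n)) : ℕ :=
  (Finset.univ.filter fun p : Fin n × Fin n => p.1 < p.2 ∧ π p.2 < π p.1).card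

section Aux

variable {V ι : Type*} [AddCommGroup V] [Module ℝ V] [DecidableEq ι]

/-- The vector obtained by applying a list of creation operators to the vacuum. -/
def adP (ad : ι → Module.End ℝ V) (vac : V) (L : List ι) : V := (L.map ad).prod vac

omit [DecidableEq ι] in
lemma adP_nil (ad : ι → Module.End ℝ V) (vac : V) : adP ad vac [] = vac := by
  simp [adP]

omit [DecidableEq ι] in
lemma adP_cons (ad : ι → Module.End ℝ V) (vac : V) (l : ι) (L : List ι) :
    adP ad vac (l :: L) = ad l (adP ad vac L) := by
  simp [adP, Module.End.mul_apply]

lemma a_adP_not_mem (q : ℝ) (a ad : ι → Module.End ℝ V)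
    (hrel : ∀ k l, a k * ad l = (if k = l then 1 else 0) + q • (ad l * a k))
    (vac : V) (hvac : ∀ k, a k vac = 0) :
    ∀ (L : List ι) (m : ι), m ∉ L → a m (adP ad vac L) = 0 := by
  intro L
  induction L with
  | nil => intro m _; simpa [adP_nil] using hvac m
  | cons l L ih =>
    intro m hm
    have hml : m ≠ l := fun h => hm (h ▸ List.mem_cons_self)
    have hmL : m ∉ L := fun h => hm (List.mem_cons_of_mem _ h)
    rw [adP_cons, ← Module.End.mul_apply, hrel m l, if_neg hml]
    simp [Module.End.mul_apply, ih m hmL]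

lemma a_adP_mem (q : ℝ) (a ad : ι → Module.End ℝ V)
    (hrel : ∀ k l, a k * ad l = (if k = l then 1 else 0) + q • (ad l * a k))
    (vac : V) (hvac : ∀ k, a k vac = 0) :
    ∀ (L : List ι) (m : ι), L.Nodup → m ∈ L →
    a m (adP ad vac L) = q ^ (L.idxOf m) • adP ad vac (L.erase m) := by
  intro L
  induction L with
  | nil => intro m _ hm; exact absurd hm List.not_mem_nil
  | cons l L ih =>
    intro m hnd hm
    rcases List.mem_cons.mp hm with h | h
    · subst h
      have hmL : m ∉ L := (List.nodup_cons.mp hnd).1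
      have h0 : a m (adP ad vac L) = 0 := a_adP_not_mem q a ad hrel vac hvac L m hmL
      rw [adP_cons, ← Module.End.mul_apply, hrel m m, if_pos rfl]
      simp [Module.End.mul_apply, h0, List.idxOf_cons_self, List.erase_cons_head]
    · have hml : m ≠ l := by
        rintro rfl; exact (List.nodup_cons.mp hnd).1 h
      rw [adP_cons, ← Module.End.mul_apply, hrel m l, if_neg hml]
      simp only [LinearMap.add_apply, LinearMap.zero_apply, LinearMap.smul_apply,
        Module.End.mul_apply, zero_add]
      rw [ih m (List.nodup_cons.mp hnd).2 h]
      rw [List.idxOf_cons_ne _ hml.symm, List.erase_cons_tail]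
      · rw [adP_cons, map_smul, smul_smul]
        congr 1
        rw [Nat.succ_eq_add_one, pow_succ]
        ring
      · simp [hml.symm]

/-- The exponent accumulated when annihilating, innermost first. -/
def Gg : List ι → List ι → ℕ
  | [], _ => 0
  | m :: M, L => L.idxOf m + Gg M (L.erase m)

lemma key (q : ℝ) (a ad : ι → Module.End ℝ V)
    (hrel : ∀ k l, a k * ad l = (if k = l then 1 else 0) + q • (ad l * a k))
    (vac : V) (hvac : ∀ k, a k vac = 0) :
    ∀ (R L : List ι), L.Nodup → R.Perm L →
    ((R.reverse.map a).prod) (adP ad vac L) = q ^ (Gg R L) • vac := by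
  intro R
  induction R with
  | nil =>
    intro L _ hperm
    have : L = [] := hperm.symm.eq_nil
    subst this
    simp [adP_nil, Gg]
  | cons m R ih =>
    intro L hnd hperm
    have hm : m ∈ L := hperm.subset (List.mem_cons_self)
    have hR : R.Perm (L.erase m) := (hperm.trans (List.perm_cons_erase hm)).cons_inv
    rw [List.reverse_cons, List.map_append, List.prod_append]
    simp only [List.map_cons, List.map_nil, List.prod_cons, List.prod_nil, mul_one,
      Module.End.mul_apply]
    rw [a_adP_mem q a ad hrel vac hvac L m hnd hm, map_smul,
      ih (L.erase m) (hnd.erase m) hR, smul_smul, Gg, pow_add]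

end Aux

section FinSide

/-- Count of "raising pairs": pairs `s < t` (positionally) in the list with `P s < P t`. -/
def cntA {n : ℕ} : List (Fin n) → ℕ
  | [] => 0
  | p :: P => P.countP (fun x => decide (p < x)) + cntA P

lemma indexOf_sorted {n : ℕ} : ∀ (J : List (Fin n)), List.Pairwise (· > ·) J →
    ∀ p ∈ J, J.idxOf p = J.countP (fun x => decide (p < x)) := by
  intro J
  induction J with
  | nil => intro _ p hp; exact absurd hp List.not_mem_nil
  | cons j J ih =>
    intro hs p hp
    have hgt : ∀ x ∈ J, j > x := (List.pairwise_cons.mp hs).1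
    rcases List.mem_cons.mp hp with h | h
    · subst h
      rw [List.idxOf_cons_self, List.countP_cons]
      have h0 : J.countP (fun x => decide (p < x)) = 0 := by
        rw [List.countP_eq_zero]
        intro x hx
        simpa using not_lt_of_gt (hgt x hx)
      simp [h0]
    · have hne : p ≠ j := by rintro rfl; exact lt_irrefl p (hgt p h)
      rw [List.idxOf_cons_ne _ hne.symm, List.countP_cons, ih (List.pairwise_cons.mp hs).2 p h]
      have : p < j := hgt p h
      simp [this, Nat.succ_eq_add_one]

lemma Gg_eq_cntA {n : ℕ} : ∀ (P J : List (Fin n)), List.Pairwise (· > ·) J →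
    P.Perm J → Gg P J = cntA P := by
  intro P
  induction P with
  | nil => intro J _ _; simp [Gg, cntA]
  | cons p P ih =>
    intro J hs hperm
    have hp : p ∈ J := hperm.subset (List.mem_cons_self)
    have hP : P.Perm (J.erase p) := (hperm.trans (List.perm_cons_erase hp)).cons_inv
    have hse : List.Pairwise (· > ·) (J.erase p) :=
      List.Pairwise.sublist (List.erase_sublist) hs
    rw [Gg, cntA, ih (J.erase p) hse hP, indexOf_sorted J hs p hp]
    congr 1
    rw [← hperm.countP_eq]
    simp [List.countP_cons]

lemma Gg_map {ι : Type*} [DecidableEq ι] {n : ℕ} {k : Fin n → ι}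
    (hk : Function.Injective k) :
    ∀ (P J : List (Fin n)), Gg (P.map k) (J.map k) = Gg P J := by
  intro P
  induction P with
  | nil => intro J; simp [Gg]
  | cons p P ih =>
    intro J
    rw [List.map_cons, Gg, Gg, ← List.map_erase hk, ih]
    congr 1
    induction J with
    | nil => simp
    | cons j J ihJ =>
      by_cases h : p = j
      · subst h; simp [List.idxOf_cons_self]
      · rw [List.map_cons, List.idxOf_cons_ne _ (fun hh => h (hk hh).symm),
          List.idxOf_cons_ne _ (fun hh => h hh.symm), ihJ]

lemma countP_ofFn {n m : ℕ} (g : Fin m → Fin n) (p : Fin n → Bool) :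
    (List.ofFn g).countP p = (Finset.univ.filter fun i => p (g i)).card := by
  induction m with
  | zero => simp
  | succ m ih =>
    rw [List.ofFn_succ, List.countP_cons, ih]
    rw [Finset.card_filter, Finset.card_filter, Fin.sum_univ_succ]
    simp [add_comm]

lemma cntA_ofFn {n m : ℕ} (g : Fin m → Fin n) :
    cntA (List.ofFn g) =
      (Finset.univ.filter fun p : Fin m × Fin m => p.1 < p.2 ∧ g p.1 < g p.2).card := by
  induction m with
  | zero => simp [cntA, List.ofFn_zero]
  | succ m ih =>
    rw [List.ofFn_succ, cntA, ih (fun i => g i.succ), countP_ofFn]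
    rw [Finset.card_filter, Finset.card_filter, Finset.card_filter, Fintype.sum_prod_type,
      Fintype.sum_prod_type, Fin.sum_univ_succ]
    congr 1
    · -- s = 0 column
      rw [Fin.sum_univ_succ]
      simp [Fin.succ_pos]
    · -- s = succ column
      apply Finset.sum_congr rfl
      intro s _
      rw [Fin.sum_univ_succ]
      simp [Fin.succ_lt_succ_iff]

lemma revOfFn {α : Type*} (m : ℕ) (f : Fin m → α) :
    (List.ofFn f).reverse = List.ofFn (fun i => f i.rev) := by
  apply List.ext_getElem
  · simp
  intro i h1 h2
  simp only [List.getElem_reverse, List.getElem_ofFn]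
  congr 1
  ext
  simp [Fin.rev]
  omega

end FinSide

/-- In the q-deformed Heisenberg algebra, realized by operators `a k` (annihilation) and
`ad k` (creation, the adjoint of `a k` with respect to the bilinear pairing `B`) on a Fock
space `V` with vacuum `vac` satisfying `a k vac = 0` and `⟨0|0⟩ = B vac vac = 1`, the vacuum
expectation value `⟨0| a(k_{π(1)}) ⋯ a(k_{π(n)}) a†(k_n) ⋯ a†(k_1) |0⟩` equals `q^{I(π)}`
for pairwise distinct momenta `k_1, …, k_n` and any permutation `π`. -/
theorem vev_eq_q_pow_inversions {V ι : Type*} [AddCommGroup V] [Module ℝ V]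
    [DecidableEq ι] (q : ℝ)
    (a ad : ι → Module.End ℝ V)
    (hrel : ∀ k l, a k * ad l = (if k = l then 1 else 0) + q • (ad l * a k))
    (vac : V) (hvac : ∀ k, a k vac = 0)
    (B : V →ₗ[ℝ] V →ₗ[ℝ] ℝ)
    (hB : B vac vac = 1)
    (hadj : ∀ k v w, B (ad k v) w = B v (a k w))
    (n : ℕ) (k : Fin n → ι) (hk : Function.Injective k)
    (π : Equiv.Perm (Fin n)) :
    B vac
      (((List.ofFn fun i => a (k (π i))).prod *
        ((List.ofFn fun i => ad (k i)).reverse).prod) vac)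
      = q ^ inversions π := by
  classical
  set P : List (Fin n) := List.ofFn (fun s => π s.rev) with hP
  set J : List (Fin n) := List.ofFn (fun i : Fin n => i.rev) with hJ
  set L : List ι := List.ofFn (fun i : Fin n => k i.rev) with hL
  set M : List ι := List.ofFn (fun i => k (π i)) with hM
  have e1 : (List.ofFn fun i => a (k (π i))) = M.map a := by
    rw [hM, List.map_ofFn]; rfl
  have e2 : (List.ofFn fun i => ad (k i)).reverse = L.map ad := by
    rw [revOfFn, hL, List.map_ofFn]; rfl
  have e3 : M.reverse = P.map k := by
    rw [hM, revOfFn, hP, List.map_ofFn]; rfl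
  have e4 : L = J.map k := by
    rw [hL, hJ, List.map_ofFn]; rfl
  have hLnd : L.Nodup := by
    rw [hL, List.nodup_ofFn]
    exact hk.comp (Fin.rev_injective)
  have hPJ : P.Perm J := by
    apply List.perm_of_nodup_nodup_toFinset_eq
    · rw [hP, List.nodup_ofFn]
      exact π.injective.comp Fin.rev_injective
    · rw [hJ, List.nodup_ofFn]
      exact Fin.rev_injective
    · ext x
      simp only [List.mem_toFinset, hP, hJ, List.mem_ofFn, Set.mem_range]
      constructor
      · intro _; exact ⟨x.rev, Fin.rev_rev x⟩
      · intro _; exact ⟨(π.symm x).rev, by simp [Fin.rev_rev]⟩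
  have hperm : (M.reverse).Perm L := by
    rw [e3, e4]
    exact hPJ.map k
  have hkey := key q a ad hrel vac hvac M.reverse L hLnd hperm
  rw [List.reverse_reverse] at hkey
  have hsorted : List.Pairwise (· > ·) J := by
    have : J = (List.finRange n).reverse := by
      rw [← List.ofFn_id n, revOfFn n id]
      exact hJ
    rw [this, List.pairwise_reverse]
    exact List.pairwise_lt_finRange n
  have hGg : Gg M.reverse L = cntA P := by
    rw [e3, e4, Gg_map hk, Gg_eq_cntA P J hsorted hPJ]
  have hcnt : cntA P = inversions π := by
    rw [hP, cntA_ofFn, inversions]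
    have hinv : Function.Involutive
        (fun p : Fin n × Fin n => (p.2.rev, p.1.rev)) := by
      intro p; simp [Fin.rev_rev]
    apply Finset.card_equiv hinv.toPerm
    intro p
    simp only [Finset.mem_filter, Finset.mem_univ, true_and,
      Function.Involutive.coe_toPerm, Fin.rev_lt_rev]
  rw [e1, e2, Module.End.mul_apply]
  have : (L.map ad).prod vac = adP ad vac L := rfl
  rw [this, hkey, map_smul, smul_eq_mul, hB, mul_one, hGg, hcnt]
end

section
/- Every element of the set S_{n,p} = {T_{1k_1} T_{1k_2} ··· T_{1k_p} : 1 < k_1 < ··· < k_p ≤ n} ⊆ S_n has inversion number (k_1 − 1) + (k_2 − 1) + ··· + (k_p − 1). -/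
/-- In 0-indexed form, the paper's permutation `T_{1k}` (with `m` corresponding to `k-1`)
sends `0 ↦ m`, `i ↦ i-1` for `0 < i ≤ m`, and fixes `i > m`; it is the inverse of the
cycle `(0 1 … m)`. -/
def T {n : ℕ} (m : Fin n) : Equiv.Perm (Fin n) := (Fin.cycleRange m)⁻¹

namespace InvAux

/-- `down i = i - 1` (with `down 0 = 0`). -/
def down {n : ℕ} (i : Fin (n + 1)) : Fin (n + 1) :=
  ⟨i.val - 1, Nat.lt_of_le_of_lt (Nat.sub_le _ _) i.isLt⟩

/-- `up i = i + 1` when that is in range, else `i`. -/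
def up {n : ℕ} (i : Fin (n + 1)) : Fin (n + 1) :=
  if h : i.val + 1 < n + 1 then ⟨i.val + 1, h⟩ else i

lemma T_apply_zero {n : ℕ} (m : Fin (n + 1)) : T m 0 = m := by
  have : Fin.cycleRange m m = 0 := Fin.cycleRange_self m
  simp [T, Equiv.Perm.inv_def, Equiv.symm_apply_eq, this]

lemma T_apply_le {n : ℕ} (m i : Fin (n + 1)) (h1 : 0 < i.val) (h2 : i.val ≤ m.val) :
    T m i = down i := by
  have hdm : down i < m := by
    rw [Fin.lt_def]; simp only [down]; omega
  have hcy : Fin.cycleRange m (down i) = i := by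
    rw [Fin.cycleRange_of_lt hdm]
    have hlast : (down i : Fin (n+1)) < Fin.last n :=
      lt_of_lt_of_le hdm (Fin.le_last m)
    apply Fin.ext
    rw [Fin.val_add_one_of_lt hlast]
    simp only [down]; omega
  simp [T, Equiv.Perm.inv_def, Equiv.symm_apply_eq, hcy]

lemma T_apply_gt {n : ℕ} (m i : Fin (n + 1)) (h : m.val < i.val) : T m i = i := by
  have hcy : Fin.cycleRange m i = i := Fin.cycleRange_of_gt (Fin.lt_def.mpr h)
  simp [T, Equiv.Perm.inv_def, Equiv.symm_apply_eq, hcy]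

lemma key {n : ℕ} (ρ : Equiv.Perm (Fin (n + 1))) (m : Fin (n + 1))
    (hρ : ∀ i : Fin (n + 1), m.val ≤ i.val → ρ i = i) :
    inversions (ρ * T m) = inversions ρ + m.val := by
  set σ := ρ * T m with hσdef
  have hclos : ∀ j : Fin (n + 1), j.val < m.val → (ρ j).val < m.val := by
    intro j hj
    by_contra hge
    push_neg at hge
    have := hρ (ρ j) hge
    have := ρ.injective this
    omega
  have hσ0 : σ 0 = m := by
    rw [hσdef, Equiv.Perm.mul_apply, T_apply_zero, hρ m le_rfl]
  have hσle : ∀ i : Fin (n + 1), 0 < i.val → i.val ≤ m.val → σ i = ρ (down i) := by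
    intro i h1 h2
    rw [hσdef, Equiv.Perm.mul_apply, T_apply_le m i h1 h2]
  have hσgt : ∀ i : Fin (n + 1), m.val < i.val → σ i = i := by
    intro i h
    rw [hσdef, Equiv.Perm.mul_apply, T_apply_gt m i h, hρ i (le_of_lt h)]
  clear hσdef
  clear_value σ
  -- bounds for σ-inversions with first coordinate nonzero
  have hBbound : ∀ a b : Fin (n + 1), 0 < a.val → a < b → σ b < σ a →
      a.val ≤ m.val ∧ b.val ≤ m.val := by
    intro a b ha hab hσab
    have hab' : a.val < b.val := Fin.lt_def.mp hab
    have h1 : a.val ≤ m.val := by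
      by_contra h
      push_neg at h
      have hb : m.val < b.val := by omega
      rw [hσgt a h, hσgt b hb] at hσab
      exact absurd (hab.trans hσab) (lt_irrefl _)
    constructor
    · exact h1
    · by_contra h
      push_neg at h
      rw [hσgt b h, hσle a ha h1] at hσab
      have : (ρ (down a)).val < m.val := hclos _ (by simp [down]; omega)
      have := Fin.lt_def.mp hσab
      omega
  -- bounds for ρ-inversions
  have hρbound : ∀ a b : Fin (n + 1), a < b → ρ b < ρ a → a.val < m.val ∧ b.val < m.val := by
    intro a b hab hρab
    have hab' : a.val < b.val := Fin.lt_def.mp hab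
    have hb : b.val < m.val := by
      by_contra h
      push_neg at h
      rw [hρ b h] at hρab
      have ha' : m.val ≤ a.val := by
        by_contra h2
        push_neg at h2
        have := hclos a h2
        have := Fin.lt_def.mp hρab
        omega
      rw [hρ a ha'] at hρab
      exact absurd (hab.trans hρab) (lt_irrefl _)
    exact ⟨by omega, hb⟩
  classical
  unfold inversions
  rw [← Finset.card_filter_add_card_filter_not
      (p := fun p : Fin (n + 1) × Fin (n + 1) => p.1 = 0)
      (s := Finset.univ.filter fun p : Fin (n + 1) × Fin (n + 1) => p.1 < p.2 ∧ σ p.2 < σ p.1)]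
  rw [Nat.add_comm]
  congr 1
  · -- pairs with first coordinate nonzero : bijection with ρ-inversions
    apply Finset.card_nbij' (i := fun p => (down p.1, down p.2)) (j := fun p => (up p.1, up p.2))
    · rintro ⟨a, b⟩ hp
      simp only [Finset.mem_coe, Finset.mem_filter, Finset.mem_univ, true_and] at hp ⊢
      obtain ⟨⟨hab, hσab⟩, ha0⟩ := hp
      have ha0' : 0 < a.val := by
        rcases Nat.eq_zero_or_pos a.val with h | h
        · exact absurd (Fin.ext h) ha0
        · exact h
      obtain ⟨ham, hbm⟩ := hBbound a b ha0' hab hσab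
      have hab' : a.val < b.val := Fin.lt_def.mp hab
      constructor
      · rw [Fin.lt_def]; simp only [down]; omega
      · rw [hσle a ha0' ham, hσle b (by omega) hbm] at hσab
        exact hσab
    · rintro ⟨a, b⟩ hp
      simp only [Finset.mem_coe, Finset.mem_filter, Finset.mem_univ, true_and] at hp ⊢
      obtain ⟨hab, hρab⟩ := hp
      obtain ⟨ham, hbm⟩ := hρbound a b hab hρab
      have hab' : a.val < b.val := Fin.lt_def.mp hab
      have hmn : m.val < n + 1 := m.isLt
      have hua : up a = ⟨a.val + 1, by omega⟩ := by simp only [up]; rw [dif_pos (by omega)]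
      have hub : up b = ⟨b.val + 1, by omega⟩ := by simp only [up]; rw [dif_pos (by omega)]
      refine ⟨⟨?_, ?_⟩, ?_⟩
      · rw [hua, hub, Fin.lt_def]; simp; omega
      · have e1 : σ (up a) = ρ a := by
          rw [hua, hσle ⟨a.val + 1, by omega⟩ (Nat.succ_pos _) (by simpa using ham)]
          rfl
        have e2 : σ (up b) = ρ b := by
          rw [hub, hσle ⟨b.val + 1, by omega⟩ (Nat.succ_pos _) (by simpa using hbm)]
          rfl
        rw [e1, e2]
        exact hρab
      · rw [hua]; intro h
        have := congrArg Fin.val h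
        simp at this
    · rintro ⟨a, b⟩ hp
      simp only [Finset.mem_coe, Finset.mem_filter, Finset.mem_univ, true_and] at hp
      obtain ⟨⟨hab, hσab⟩, ha0⟩ := hp
      have ha0' : 0 < a.val := by
        rcases Nat.eq_zero_or_pos a.val with h | h
        · exact absurd (Fin.ext h) ha0
        · exact h
      have hab' : a.val < b.val := Fin.lt_def.mp hab
      have hupdown : ∀ x : Fin (n + 1), 0 < x.val → up (down x) = x := by
        intro x hx
        unfold up
        rw [dif_pos (show (down x).val + 1 < n + 1 by have := x.isLt; simp only [down]; omega)]
        apply Fin.ext; show (down x).val + 1 = x.val; simp only [down]; omega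
      simp only [Prod.mk.injEq]
      exact ⟨by rw [hupdown a ha0'], by rw [hupdown b (by omega)]⟩
    · rintro ⟨a, b⟩ hp
      simp only [Finset.mem_coe, Finset.mem_filter, Finset.mem_univ, true_and] at hp
      obtain ⟨hab, hρab⟩ := hp
      obtain ⟨ham, hbm⟩ := hρbound a b hab hρab
      have hmn : m.val < n + 1 := m.isLt
      have hdownup : ∀ x : Fin (n + 1), x.val < m.val → down (up x) = x := by
        intro x hx
        simp only [up]
        rw [dif_pos (by omega)]
        simp only [down]
        apply Fin.ext; simp
      simp only [Prod.mk.injEq]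
      exact ⟨hdownup a ham, hdownup b hbm⟩

  · -- pairs with first coordinate 0 : there are m of them
    rw [show (m.val = (Finset.Ioc (0 : Fin (n + 1)) m).card) from by
          rw [Fin.card_Ioc]; simp]
    apply Finset.card_nbij' (i := fun p => p.2) (j := fun b => ((0 : Fin (n + 1)), b))
    · rintro ⟨a, b⟩ hp
      simp only [Finset.mem_coe, Finset.mem_filter, Finset.mem_univ, true_and] at hp
      obtain ⟨⟨hab, hσab⟩, ha0⟩ := hp
      subst ha0
      rw [Finset.mem_coe, Finset.mem_Ioc]
      refine ⟨hab, ?_⟩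
      rw [hσ0] at hσab
      by_contra h
      have h' : m.val < b.val := Fin.lt_def.mp (lt_of_not_ge h)
      rw [hσgt b h'] at hσab
      exact absurd (Fin.lt_def.mp hσab) (by omega)
    · intro b hb
      rw [Finset.mem_coe, Finset.mem_Ioc] at hb
      obtain ⟨hb0, hbm⟩ := hb
      have hb0' : 0 < b.val := Fin.lt_def.mp hb0
      have hbm' : b.val ≤ m.val := Fin.le_def.mp hbm
      simp only [Finset.mem_coe, Finset.mem_filter, Finset.mem_univ, true_and]
      refine ⟨⟨hb0, ?_⟩, by trivial⟩
      rw [hσ0, hσle b hb0' hbm']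
      have : (ρ (down b)).val < m.val := hclos _ (by simp [down]; omega)
      exact Fin.lt_def.mpr this
    · rintro ⟨a, b⟩ hp
      simp only [Finset.mem_coe, Finset.mem_filter] at hp
      simp [hp.2]
    · intro b _; rfl
lemma prod_fix {n : ℕ} (l : List (Equiv.Perm (Fin n))) (x : Fin n)
    (h : ∀ g ∈ l, g x = x) : l.prod x = x := by
  induction l with
  | nil => rfl
  | cons g l ih =>
    rw [List.prod_cons, Equiv.Perm.mul_apply, ih (fun g hg => h g (List.mem_cons_of_mem _ hg)),
      h g (List.mem_cons_self)]

lemma inversions_one {n : ℕ} : inversions (1 : Equiv.Perm (Fin n)) = 0 := by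
  unfold inversions
  rw [Finset.card_eq_zero, Finset.filter_eq_empty_iff]
  rintro ⟨a, b⟩ _
  simp only [Equiv.Perm.one_apply, not_and]
  intro h1 h2
  exact absurd (h1.trans h2) (lt_irrefl _)

end InvAux

/-- Every element `T_{1k_1} T_{1k_2} ⋯ T_{1k_p}` of `S_{n,p}` (with `1 < k_1 < ⋯ < k_p ≤ n`,
here 0-indexed: `0 < m_1 < ⋯ < m_p`) has inversion number `(k_1 − 1) + ⋯ + (k_p − 1)`,
i.e. `m_1 + ⋯ + m_p`. -/
theorem inversions_prod_T (n p : ℕ) (m : Fin p → Fin n)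
    (hmono : StrictMono m) (hpos : ∀ i, 0 < (m i).val) :
    inversions ((List.ofFn fun i => T (m i)).prod) = ∑ i, (m i).val := by
  rcases n with _ | n
  · rcases p with _ | p
    · simp [InvAux.inversions_one]
    · exact (m ⟨0, Nat.succ_pos _⟩).elim0
  · induction p with
    | zero => simp [InvAux.inversions_one]
    | succ p ih =>
      rw [List.ofFn_succ', List.prod_concat]
      have hfix : ∀ i : Fin (n + 1), (m (Fin.last p)).val ≤ i.val →
          (List.ofFn fun i => T (m (Fin.castSucc i))).prod i = i := by
        intro i hi
        apply InvAux.prod_fix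
        intro g hg
        rw [List.mem_ofFn] at hg
        obtain ⟨j, rfl⟩ := hg
        have : m (Fin.castSucc j) < m (Fin.last p) := hmono (Fin.castSucc_lt_last j)
        exact InvAux.T_apply_gt _ _ (by have := Fin.lt_def.mp this; omega)
      rw [InvAux.key _ _ hfix]
      rw [ih (fun i => m (Fin.castSucc i))
        (fun a b hab => hmono (Fin.castSucc_lt_castSucc_iff.mpr hab))
        (fun i => hpos _)]
      rw [Fin.sum_univ_castSucc]
end

section
/- The map sending a subset M = {m_1 < ··· < m_s} ⊆ {2,...,n} to the permutation T_{1m_1}···T_{1m_s} ∈ S_n is injective: distinct subsets M give distinct permutations T_{1m_1}···T_{1m_s} ∈ S_n. -/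
lemma T_apply_eq {n : ℕ} (m x : Fin n) : Fin.cycleRange m (T m x) = x := by
  rw [T]; exact Equiv.apply_symm_apply _ _

lemma T_fix {n : ℕ} {m x : Fin n} (h : m < x) : T m x = x := by
  cases n with
  | zero => exact m.elim0
  | succ n =>
    have hc : Fin.cycleRange m x = x := Fin.cycleRange_of_gt h
    conv_lhs => rw [T, ← hc]
    exact Equiv.symm_apply_apply _ _

lemma T_le {n : ℕ} {m x : Fin n} (h : x ≤ m) : T m x ≤ m := by
  by_contra h'
  push_neg at h'
  have hc : Fin.cycleRange m (T m x) = T m x := by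
    cases n with
    | zero => exact m.elim0
    | succ n => exact Fin.cycleRange_of_gt h'
  rw [T_apply_eq] at hc
  rw [← hc] at h'
  exact absurd h (not_le.mpr h')

lemma T_self_lt {n : ℕ} {m : Fin n} (h : 0 < m.val) : T m m < m := by
  have hle : T m m ≤ m := T_le le_rfl
  refine lt_of_le_of_ne hle fun he => ?_
  cases n with
  | zero => exact m.elim0
  | succ n =>
    have h2 := T_apply_eq m m
    rw [he, Fin.cycleRange_self] at h2
    rw [← h2] at h
    simp at h

lemma prod_fix {n : ℕ} (l : List (Fin n)) {x : Fin n} (h : ∀ a ∈ l, a < x) :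
    (l.map T).prod x = x := by
  induction l with
  | nil => rfl
  | cons a l ih =>
    simp only [List.map_cons, List.prod_cons, Equiv.Perm.mul_apply]
    rw [ih fun b hb => h b (List.mem_cons_of_mem _ hb), T_fix (h a List.mem_cons_self)]

lemma prod_lt {n : ℕ} (l : List (Fin n)) {c x : Fin n} (hl : ∀ a ∈ l, a < c) (hx : x < c) :
    (l.map T).prod x < c := by
  induction l with
  | nil => simpa
  | cons a l ih =>
    simp only [List.map_cons, List.prod_cons, Equiv.Perm.mul_apply]
    have hy := ih fun b hb => hl b (List.mem_cons_of_mem _ hb)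
    set y := (l.map T).prod x with hy'
    rcases le_or_gt y a with hya | hya
    · exact lt_of_le_of_lt (T_le hya) (hl a List.mem_cons_self)
    · rw [T_fix hya]; exact hy

lemma sort_max_erase {n : ℕ} (M : Finset (Fin n)) (hM : M.Nonempty) :
    M.sort (· ≤ ·) = (M.erase (M.max' hM)).sort (· ≤ ·) ++ [M.max' hM] := by
  set a := M.max' hM with ha
  refine (fun hp h1 h2 => List.Perm.eq_of_pairwise' (r := (· ≤ ·)) h1 h2 hp) ?_ ?_ ?_
  · refine Multiset.coe_eq_coe.mp ?_
    rw [← Multiset.coe_add, Finset.sort_eq, Finset.sort_eq, add_comm, Multiset.coe_singleton,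
      Multiset.singleton_add, Finset.erase_val, Multiset.cons_erase (M.max'_mem hM)]
  · exact Finset.pairwise_sort _ _
  · show List.Pairwise _ _
    rw [List.pairwise_append]
    refine ⟨Finset.pairwise_sort _ _, List.pairwise_singleton _ _, fun x hx b hb => ?_⟩
    rw [List.mem_singleton] at hb
    subst hb
    rw [Finset.mem_sort] at hx
    exact M.le_max' x (Finset.mem_of_mem_erase hx)

lemma eval_max {n : ℕ} (N : Finset (Fin n)) (hNe : N.Nonempty)
    (hN : ∀ m ∈ N, 0 < (m : Fin n).val) :
    ((N.sort (· ≤ ·)).map T).prod (N.max' hNe) < N.max' hNe := by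
  set b := N.max' hNe with hb
  rw [sort_max_erase N hNe, List.map_append, List.prod_append]
  simp only [List.map_cons, List.map_nil, List.prod_cons, List.prod_nil, mul_one,
    Equiv.Perm.mul_apply]
  have h1 : T b b < b := T_self_lt (hN b (N.max'_mem hNe))
  exact prod_lt _ (fun x hx => by
    rw [Finset.mem_sort] at hx
    exact lt_of_le_of_ne (N.le_max' x (Finset.mem_of_mem_erase hx)) (Finset.ne_of_mem_erase hx))
    h1

lemma aux {n : ℕ} : ∀ k (M N : Finset (Fin n)), M.card + N.card ≤ k →
    (∀ m ∈ M, 0 < (m : Fin n).val) → (∀ m ∈ N, 0 < (m : Fin n).val) →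
    ((M.sort (· ≤ ·)).map T).prod = ((N.sort (· ≤ ·)).map T).prod → M = N := by
  intro k
  induction k with
  | zero =>
    intro M N hc _ _ _
    have hM0 : M = ∅ := Finset.card_eq_zero.mp (by omega)
    have hN0 : N = ∅ := Finset.card_eq_zero.mp (by omega)
    rw [hM0, hN0]
  | succ k ih =>
    intro M N hc hM hN h
    rcases M.eq_empty_or_nonempty with hMe | hMne
    · subst hMe
      rcases N.eq_empty_or_nonempty with hNe | hNne
      · rw [hNe]
      · exfalso
        have h2 := eval_max N hNne hN
        rw [← h] at h2
        simp at h2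
    · rcases N.eq_empty_or_nonempty with hNe | hNne
      · exfalso
        subst hNe
        have h2 := eval_max M hMne hM
        rw [h] at h2
        simp at h2
      · set a := M.max' hMne with ha
        set b := N.max' hNne with hb
        have hab : a = b := by
          rcases lt_trichotomy a b with hlt | heq | hgt
          · exfalso
            have h1 : ((M.sort (· ≤ ·)).map T).prod b = b :=
              prod_fix _ fun x hx => lt_of_le_of_lt
                (M.le_max' x ((Finset.mem_sort _).mp hx)) hlt
            have h2 := eval_max N hNne hN
            rw [← h, h1] at h2
            exact absurd h2 (lt_irrefl _)
          · exact heq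
          · exfalso
            have h1 : ((N.sort (· ≤ ·)).map T).prod a = a :=
              prod_fix _ fun x hx => lt_of_le_of_lt
                (N.le_max' x ((Finset.mem_sort _).mp hx)) hgt
            have h2 := eval_max M hMne hM
            rw [h, h1] at h2
            exact absurd h2 (lt_irrefl _)
        rw [sort_max_erase M hMne, sort_max_erase N hNne, ← ha, ← hb, ← hab] at h
        simp only [List.map_append, List.prod_append, List.map_cons, List.map_nil,
          List.prod_cons, List.prod_nil, mul_one] at h
        have h' := mul_right_cancel h
        have hcard : (M.erase a).card + (N.erase (M.max' hMne)).card ≤ k := by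
          rw [Finset.card_erase_of_mem (M.max'_mem hMne),
            Finset.card_erase_of_mem (by rw [← ha, hab]; exact N.max'_mem hNne)]
          have h1 : 1 ≤ M.card := Finset.card_pos.mpr hMne
          have h2 : 1 ≤ N.card := Finset.card_pos.mpr hNne
          omega
        have heq := ih (M.erase a) (N.erase a)
          (by rw [ha]; exact hcard)
          (fun m hm => hM m (Finset.mem_of_mem_erase hm))
          (fun m hm => hN m (Finset.mem_of_mem_erase hm)) h'
        have hbM : a ∈ N := by rw [hab]; exact N.max'_mem hNne
        calc M = insert a (M.erase a) := (Finset.insert_erase (M.max'_mem hMne)).symm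
          _ = insert a (N.erase a) := by rw [heq]
          _ = N := Finset.insert_erase hbM

/-- Distinct subsets `M = {m_1 < ⋯ < m_s}` of `{2, …, n}` (0-indexed: subsets of `Fin n`
consisting of nonzero elements) give distinct ordered products `T_{1m_1} ⋯ T_{1m_s} ∈ S_n`:
the assignment `M ↦ T_{1m_1} ⋯ T_{1m_s}` is injective. -/
theorem prod_T_injective (n : ℕ) (M N : Finset (Fin n))
    (hM : ∀ m ∈ M, 0 < (m : Fin n).val) (hN : ∀ m ∈ N, 0 < (m : Fin n).val)
    (h : ((M.sort (· ≤ ·)).map T).prod = ((N.sort (· ≤ ·)).map T).prod) :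
    M = N :=
  aux (M.card + N.card) M N le_rfl hM hN h
end
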